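/- arXiv:2309.01761 — 7 statements merged into one kernel-verified Lean document; each statement's English description precedes it below -/
import Mathlib

section
/- Let K be a field, L a field extension of K, and ψ : L → L a ring homomorphism such that ψ(x) = x for every x ∈ K. Let z ∈ L with ψ(z) ≠ z, and let a, b, c, d ∈ K with ad − bc ≠ 0 and cz + d ≠ 0. Set γ·z := (az + b)/(cz + d). Then cψ(z) + d ≠ 0, γ·z ≠ ψ(γ·z), and (γ·z − ψ(γ·z))⁻¹ = (cz + d)² · (ad − bc)⁻¹ · ( (z − ψ(z))⁻¹ − c/(cz + d) ). -/
/-- Proposition 3.4: transformation of `(z - ψ z)⁻¹` under a Möbius action by a matrix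
with entries in the fixed field `K` of a ring homomorphism `ψ : L → L`. -/
theorem stmt0 {K L : Type*} [Field K] [Field L] [Algebra K L]
    (ψ : L →+* L) (hψ : ∀ x : K, ψ (algebraMap K L x) = algebraMap K L x)
    (z : L) (hz : ψ z ≠ z)
    (a b c d : K) (hdet : a * d - b * c ≠ 0)
    (hj : algebraMap K L c * z + algebraMap K L d ≠ 0) :
    algebraMap K L c * ψ z + algebraMap K L d ≠ 0 ∧
    (algebraMap K L a * z + algebraMap K L b) / (algebraMap K L c * z + algebraMap K L d) ≠
      ψ ((algebraMap K L a * z + algebraMap K L b) /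
        (algebraMap K L c * z + algebraMap K L d)) ∧
    ((algebraMap K L a * z + algebraMap K L b) / (algebraMap K L c * z + algebraMap K L d) -
        ψ ((algebraMap K L a * z + algebraMap K L b) /
          (algebraMap K L c * z + algebraMap K L d)))⁻¹ =
      (algebraMap K L c * z + algebraMap K L d) ^ 2 * (algebraMap K L (a * d - b * c))⁻¹ *
        ((z - ψ z)⁻¹ - algebraMap K L c / (algebraMap K L c * z + algebraMap K L d)) := by
  set A := algebraMap K L with hA
  have hψj : ψ (A c * z + A d) = A c * ψ z + A d := by
    simp [map_add, map_mul, hψ]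
  have h1 : A c * ψ z + A d ≠ 0 := by
    rw [← hψj]
    exact fun h => hj (ψ.injective (by simpa using h))
  have hmap : A (a * d - b * c) = A a * A d - A b * A c := by
    simp [map_sub, map_mul]
  have hdetL : A a * A d - A b * A c ≠ 0 := by
    rw [← hmap]
    exact fun h => hdet ((algebraMap K L).injective (by simpa using h))
  have hzz : z - ψ z ≠ 0 := sub_ne_zero.mpr (Ne.symm hz)
  have hψq : ψ ((A a * z + A b) / (A c * z + A d)) = (A a * ψ z + A b) / (A c * ψ z + A d) := by
    rw [map_div₀, hψj]
    simp [map_add, map_mul, hψ]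
  have hdiff : (A a * z + A b) / (A c * z + A d) - ψ ((A a * z + A b) / (A c * z + A d)) =
      (A a * A d - A b * A c) * (z - ψ z) / ((A c * z + A d) * (A c * ψ z + A d)) := by
    rw [hψq]
    rw [div_sub_div _ _ hj h1]
    ring
  refine ⟨h1, ?_, ?_⟩
  · rw [← sub_ne_zero, hdiff]
    exact div_ne_zero (mul_ne_zero hdetL hzz) (mul_ne_zero hj h1)
  · rw [hdiff, hmap]
    field_simp
    ring
end

section
/- For all integers k ≥ 1, r ≥ 1 and all natural numbers j, ℓ with j + ℓ ≤ r − 1, one has ∑_{i=0}^{r−j} (−1)^{i+ℓ} · C(k + r − 1, i) · C(k + r − 1 − i, r − j − i) · C(i, ℓ) = 0. -/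
lemma aux_alt_sum (m ℓ : ℕ) (h : ℓ < m) :
    ∑ i ∈ Finset.range (m + 1), (-1 : ℤ) ^ i * Nat.choose m i * Nat.choose i ℓ = 0 := by
  have hℓm : ℓ ≤ m + 1 := by omega
  rw [← Finset.sum_range_add_sum_Ico _ hℓm]
  have h1 : ∑ i ∈ Finset.range ℓ, (-1 : ℤ) ^ i * Nat.choose m i * Nat.choose i ℓ = 0 := by
    apply Finset.sum_eq_zero
    intro i hi
    simp [Nat.choose_eq_zero_of_lt (Finset.mem_range.mp hi)]
  rw [h1, zero_add, Finset.sum_Ico_eq_sum_range]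
  have hrange : m + 1 - ℓ = (m - ℓ) + 1 := by omega
  rw [hrange]
  have key : ∀ s ∈ Finset.range ((m - ℓ) + 1),
      (-1 : ℤ) ^ (ℓ + s) * Nat.choose m (ℓ + s) * Nat.choose (ℓ + s) ℓ
      = ((-1 : ℤ) ^ ℓ * Nat.choose m ℓ) * ((-1 : ℤ) ^ s * Nat.choose (m - ℓ) s) := by
    intro s hs
    have hsm : ℓ + s ≤ m := by
      have := Finset.mem_range.mp hs; omega
    have h2 : (Nat.choose m (ℓ + s) * Nat.choose (ℓ + s) ℓ : ℤ)
        = (Nat.choose m ℓ : ℤ) * Nat.choose (m - ℓ) s := by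
      have h3 := Nat.choose_mul (n := m) (Nat.le_add_right ℓ s)
      rw [Nat.add_sub_cancel_left] at h3
      exact_mod_cast h3
    rw [pow_add]
    linear_combination ((-1 : ℤ) ^ ℓ * (-1 : ℤ) ^ s) * h2
  rw [Finset.sum_congr rfl key, ← Finset.mul_sum]
  rw [Int.alternating_sum_range_choose_of_ne (by omega : m - ℓ ≠ 0), mul_zero]

/-- Lemma 4.3: for `k, r ≥ 1` and `j + ℓ ≤ r − 1`,
`∑_{i=0}^{r−j} (−1)^{i+ℓ} C(k+r−1, i) C(k+r−1−i, r−j−i) C(i, ℓ) = 0`. -/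
theorem stmt3 (k r j ℓ : ℕ) (hk : 1 ≤ k) (hr : 1 ≤ r) (h : j + ℓ ≤ r - 1) :
    ∑ i ∈ Finset.range (r - j + 1),
      (-1 : ℤ) ^ (i + ℓ) * Nat.choose (k + r - 1) i *
        Nat.choose (k + r - 1 - i) (r - j - i) * Nat.choose i ℓ = 0 := by
  set N := k + r - 1 with hN
  set m := r - j with hm
  have hmN : m ≤ N := by omega
  have hℓm : ℓ < m := by omega
  have key : ∀ i ∈ Finset.range (m + 1),
      (-1 : ℤ) ^ (i + ℓ) * Nat.choose N i * Nat.choose (N - i) (m - i) * Nat.choose i ℓ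
      = ((-1 : ℤ) ^ ℓ * Nat.choose N m) * ((-1 : ℤ) ^ i * Nat.choose m i * Nat.choose i ℓ) := by
    intro i hi
    have him : i ≤ m := by have := Finset.mem_range.mp hi; omega
    have h2 : (Nat.choose N m * Nat.choose m i : ℤ)
        = (Nat.choose N i : ℤ) * Nat.choose (N - i) (m - i) := by
      exact_mod_cast Nat.choose_mul (n := N) him
    rw [pow_add]
    linear_combination (-(-1 : ℤ) ^ i * (-1 : ℤ) ^ ℓ * (Nat.choose i ℓ : ℤ)) * h2
  rw [Finset.sum_congr rfl key, ← Finset.mul_sum, aux_alt_sum m ℓ hℓm, mul_zero]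
end

section
/- Let k, r, μ, w, ℓ be natural numbers with r ≥ 1 and μ ≤ k. Then ∑_{i=w}^{w+ℓ} (−1)^{i+w} · C(μ, i) · C(k + r − 1 − i, w + ℓ − i) · C(i, w) = C(μ, w) · C(k − μ + r − 1, ℓ). -/
open Finset

/-- Key identity: `∑_{j=0}^{ℓ} (-1)^j C(m,j) C(n-j, ℓ-j) = C(n-m, ℓ)` for `m ≤ n`. -/
lemma aux_sum (m : ℕ) : ∀ n ℓ : ℕ, m ≤ n →
    ∑ j ∈ range (ℓ + 1), (-1 : ℤ) ^ j * (m.choose j) * ((n - j).choose (ℓ - j))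
      = ((n - m).choose ℓ : ℤ) := by
  induction m with
  | zero =>
    intro n ℓ _
    rw [Finset.sum_eq_single 0]
    · simp
    · intro j _ hj0
      rw [Nat.choose_eq_zero_of_lt (Nat.pos_of_ne_zero hj0)]
      simp
    · simp
  | succ m ih =>
    intro n ℓ hmn
    cases ℓ with
    | zero => simp
    | succ L =>
      have hmn' : m ≤ n - 1 := by omega
      have key :
          ∑ j ∈ range (L + 2),
              ((-1 : ℤ) ^ j * ((m + 1).choose j) * ((n - j).choose (L + 1 - j))
                - (-1 : ℤ) ^ j * (m.choose j) * ((n - j).choose (L + 1 - j)))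
            = - ((n - 1 - m).choose L : ℤ) := by
        rw [Finset.sum_range_succ']
        have h0 : ((-1 : ℤ) ^ 0 * ((m + 1).choose 0) * ((n - 0).choose (L + 1 - 0))
            - (-1 : ℤ) ^ 0 * (m.choose 0) * ((n - 0).choose (L + 1 - 0))) = 0 := by
          simp
        rw [h0, add_zero]
        have hterm : ∀ j ∈ range (L + 1),
            ((-1 : ℤ) ^ (j + 1) * ((m + 1).choose (j + 1)) * ((n - (j + 1)).choose (L + 1 - (j + 1)))
              - (-1 : ℤ) ^ (j + 1) * (m.choose (j + 1)) * ((n - (j + 1)).choose (L + 1 - (j + 1))))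
            = -((-1 : ℤ) ^ j * (m.choose j) * ((n - 1 - j).choose (L - j))) := by
          intro j _
          have h1 : n - (j + 1) = n - 1 - j := by omega
          have h2 : L + 1 - (j + 1) = L - j := by omega
          have h3 : ((m + 1).choose (j + 1) : ℤ) = m.choose j + m.choose (j + 1) := by
            rw [Nat.choose_succ_succ]; push_cast; ring
          rw [h1, h2, h3, pow_succ]
          ring
        rw [Finset.sum_congr rfl hterm, Finset.sum_neg_distrib,
          ih (n - 1) L hmn']
      have hS : ∑ j ∈ range (L + 2), (-1 : ℤ) ^ j * ((m + 1).choose j) * ((n - j).choose (L + 1 - j))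
          = ((n - m).choose (L + 1) : ℤ) - ((n - 1 - m).choose L : ℤ) := by
        have := Finset.sum_sub_distrib (s := range (L + 2))
          (f := fun j => (-1 : ℤ) ^ j * ((m + 1).choose j) * ((n - j).choose (L + 1 - j)))
          (g := fun j => (-1 : ℤ) ^ j * (m.choose j) * ((n - j).choose (L + 1 - j)))
        rw [this] at key
        rw [ih n (L + 1) (by omega)] at key
        linarith
      rw [hS]
      have h1 : n - m = (n - (m + 1)) + 1 := by omega
      have h2 : n - 1 - m = n - (m + 1) := by omega
      rw [h1, h2, Nat.choose_succ_succ]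
      push_cast
      ring

/-- The binomial identity verified inside Proposition 4.5 (claim (C:22)):
`∑_{i=w}^{w+ℓ} (−1)^{i+w} C(μ,i) C(k+r−1−i, w+ℓ−i) C(i,w) = C(μ,w) C(k−μ+r−1, ℓ)`. -/
theorem stmt4 (k r μ w ℓ : ℕ) (hr : 1 ≤ r) (hμ : μ ≤ k) :
    ∑ i ∈ Finset.Icc w (w + ℓ),
      (-1 : ℤ) ^ (i + w) * Nat.choose μ i *
        Nat.choose (k + r - 1 - i) (w + ℓ - i) * Nat.choose i w =
      (Nat.choose μ w : ℤ) * Nat.choose (k - μ + r - 1) ℓ := by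
  by_cases hw : w ≤ μ
  · have hIcc : Finset.Icc w (w + ℓ) = Finset.Ico w (w + ℓ + 1) := by
      rw [Finset.Ico_add_one_right_eq_Icc]
    rw [hIcc, Finset.sum_Ico_eq_sum_range]
    have hrange : w + ℓ + 1 - w = ℓ + 1 := by omega
    rw [hrange]
    have hterm : ∀ j ∈ range (ℓ + 1),
        (-1 : ℤ) ^ (w + j + w) * Nat.choose μ (w + j) *
            Nat.choose (k + r - 1 - (w + j)) (w + ℓ - (w + j)) * Nat.choose (w + j) w
        = (Nat.choose μ w : ℤ) *
            ((-1 : ℤ) ^ j * ((μ - w).choose j) * (((k + r - 1 - w) - j).choose (ℓ - j))) := by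
      intro j _
      have e1 : (-1 : ℤ) ^ (w + j + w) = (-1 : ℤ) ^ j := by
        have : w + j + w = j + 2 * w := by ring
        rw [this, pow_add, pow_mul, neg_one_sq, one_pow, mul_one]
      have e2 : k + r - 1 - (w + j) = (k + r - 1 - w) - j := by omega
      have e3 : w + ℓ - (w + j) = ℓ - j := by omega
      by_cases hjμ : w + j ≤ μ
      · have e4 : (Nat.choose μ (w + j) : ℤ) * Nat.choose (w + j) w
            = (Nat.choose μ w : ℤ) * ((μ - w).choose j) := by
          have := Nat.choose_mul (n := μ) (k := w + j) (s := w) (by omega)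
          have h5 : w + j - w = j := by omega
          rw [h5] at this
          exact_mod_cast this
        rw [e1, e2, e3]
        calc (-1 : ℤ) ^ j * Nat.choose μ (w + j) *
              Nat.choose (k + r - 1 - w - j) (ℓ - j) * Nat.choose (w + j) w
            = ((Nat.choose μ (w + j) : ℤ) * Nat.choose (w + j) w) *
              ((-1 : ℤ) ^ j * Nat.choose (k + r - 1 - w - j) (ℓ - j)) := by ring
          _ = _ := by rw [e4]; ring
      · have z1 : Nat.choose μ (w + j) = 0 := Nat.choose_eq_zero_of_lt (by omega)
        have z2 : (μ - w).choose j = 0 := Nat.choose_eq_zero_of_lt (by omega)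
        rw [z1, z2]
        simp
    rw [Finset.sum_congr rfl hterm, ← Finset.mul_sum]
    rw [aux_sum (μ - w) (k + r - 1 - w) ℓ (by omega)]
    have : k + r - 1 - w - (μ - w) = k - μ + r - 1 := by omega
    rw [this]
  · have hz : ∀ i ∈ Finset.Icc w (w + ℓ),
        (-1 : ℤ) ^ (i + w) * Nat.choose μ i *
          Nat.choose (k + r - 1 - i) (w + ℓ - i) * Nat.choose i w = 0 := by
      intro i hi
      rw [Finset.mem_Icc] at hi
      rw [Nat.choose_eq_zero_of_lt (by omega : μ < i)]
      simp
    rw [Finset.sum_congr rfl hz, Finset.sum_const, smul_zero,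
      Nat.choose_eq_zero_of_lt (by omega : μ < w)]
    simp
end

section
/- For all integers k ≥ 1, i ≥ 2, n ≥ 1 and r with i + n ≤ r, one has ∑_{j=0}^{n} (−1)^{j} · C(k + r − 1, r − i − j) · C(r − i − j, n − j) · C(k + i + j − 1, j) = 0. -/
lemma stmt7_aux (L M n j : ℕ) (hj : j ≤ n) (hn : n ≤ M) :
    (L + M).choose (M - j) * (M - j).choose (n - j) * (L + j).choose j
      = (L + M - n).choose (M - n) * ((L + M).choose n * n.choose j) := by
  have hjM : j ≤ M := hj.trans hn
  have e1 : (L + M).choose (M - j) = (L + M).choose (L + j) := by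
    rw [show M - j = L + M - (L + j) by omega, Nat.choose_symm (by omega)]
  have e2 : (L + M).choose (L + j) * (L + j).choose j
      = (L + M).choose j * (L + M - j).choose L := by
    have := Nat.choose_mul (n := L + M) (show j ≤ L + j by omega)
    simpa [Nat.add_sub_cancel] using this
  have e3 : (L + M - j).choose L = (L + M - j).choose (M - j) := by
    rw [show M - j = (L + M - j) - L by omega, Nat.choose_symm (by omega)]
  have e4 : (L + M - j).choose (M - j) * (M - j).choose (n - j)
      = (L + M - j).choose (n - j) * (L + M - n).choose (M - n) := by
    rw [Nat.choose_mul (n := L + M - j) (show n - j ≤ M - j by omega),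
      show L + M - j - (n - j) = L + M - n by omega, show M - j - (n - j) = M - n by omega]
  have e5 : (L + M).choose n * n.choose j = (L + M).choose j * (L + M - j).choose (n - j) :=
    Nat.choose_mul hj
  rw [e1, mul_right_comm, e2, e3, mul_assoc, e4, e5]
  ring

/-- Case 1 of the proof of Theorem 4.8: for `k ≥ 1`, `i ≥ 2`, `n ≥ 1` and `i + n ≤ r`,
`∑_{j=0}^{n} (−1)^j C(k+r−1, r−i−j) C(r−i−j, n−j) C(k+i+j−1, j) = 0`. -/
theorem stmt7 (k i n r : ℕ) (hk : 1 ≤ k) (hi : 2 ≤ i) (hn : 1 ≤ n) (h : i + n ≤ r) :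
    ∑ j ∈ Finset.range (n + 1),
      (-1 : ℤ) ^ j * Nat.choose (k + r - 1) (r - i - j) *
        Nat.choose (r - i - j) (n - j) * Nat.choose (k + i + j - 1) j = 0 := by
  have key : ∀ j ∈ Finset.range (n + 1),
      (-1 : ℤ) ^ j * Nat.choose (k + r - 1) (r - i - j) *
        Nat.choose (r - i - j) (n - j) * Nat.choose (k + i + j - 1) j
      = ((Nat.choose (k + r - 1 - n) (r - i - n) * Nat.choose (k + r - 1) n : ℕ) : ℤ) *
          ((-1 : ℤ) ^ j * Nat.choose n j) := by
    intro j hj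
    rw [Finset.mem_range] at hj
    have hj' : j ≤ n := by omega
    have := stmt7_aux (k + i - 1) (r - i) n j hj' (by omega)
    rw [show k + i - 1 + (r - i) = k + r - 1 by omega,
      show k + i - 1 + j = k + i + j - 1 by omega] at this
    have h2 := congrArg (Nat.cast : ℕ → ℤ) this
    push_cast at h2
    push_cast
    linear_combination (-1 : ℤ) ^ j * h2
  rw [Finset.sum_congr rfl key, ← Finset.mul_sum,
    Int.alternating_sum_range_choose_of_ne (by omega), mul_zero]
end

section
/- For all integers k ≥ 1 and natural numbers n, r with 2 ≤ n ≤ r − 1, one has r·k^{n−1} · ∑_{i=2}^{n} (−1)^{r−i} C(k+r−1, r−i) C(r−i, n−i) C(k+i−1, i) + r·k^{n} · ∑_{i=3}^{n+1} (−1)^{r−i} C(k+r−1, r−i) C(r−i, n−i+1) C(k+i−1, i−1) + (−1)^{r−1} (r−1)·k^{n} · C(k+r−1, r−1) · C(r, n) + (−1)^{r} · r·(k+1)·k^{n} · C(k+r−1, r−2) · C(r−2, n−1) = 0. -/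
open Finset

lemma tri {a b c : ℕ} (hba : b ≤ a) (hcb : c ≤ b) :
    a.choose b * b.choose c = a.choose (b - c) * (a - (b - c)).choose c := by
  rw [← Nat.choose_symm hcb, Nat.choose_mul (n := a) (Nat.sub_le b c), Nat.sub_sub_self hcb]

lemma npow_sub (n i : ℕ) (h : i ≤ n) : (-1:ℤ)^(n-i) = (-1)^n * (-1)^i := by
  conv_rhs => rw [show n = (n-i)+i from by omega]
  rw [pow_add, mul_assoc, ← mul_pow]
  norm_num

lemma keyG (K : ℕ) : ∀ n : ℕ, 1 ≤ n →
    ∑ i ∈ range (n+1), (-1:ℤ)^i * ((K+n).choose (n-i)) * ((K+i).choose i) = 0 := by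
  induction K with
  | zero =>
    intro n hn
    have h : ∀ i ∈ range (n+1), (-1:ℤ)^i * ((0+n).choose (n-i)) * ((0+i).choose i)
        = (-1:ℤ)^i * (n.choose i) := by
      intro i hi
      rw [mem_range] at hi
      rw [Nat.zero_add, Nat.zero_add, Nat.choose_self,
        Nat.choose_symm (by omega : i ≤ n), Nat.cast_one, mul_one]
    rw [Finset.sum_congr rfl h, Int.alternating_sum_range_choose_of_ne (by omega)]
  | succ K ih =>
    intro n
    induction n with
    | zero => omega
    | succ n ihn =>
      intro _
      rcases Nat.eq_zero_or_pos n with h0 | hpos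
      · subst h0
        simp [Finset.sum_range_succ]
      have hinner : ∑ i ∈ range (n+1),
          (-1:ℤ)^i * ((K+1+n).choose (n-i)) * ((K+1+i).choose i) = 0 := ihn hpos
      have houter : ∑ i ∈ range (n+1+1),
          (-1:ℤ)^i * ((K+(n+1)).choose (n+1-i)) * ((K+i).choose i) = 0 := ih (n+1) (by omega)
      set R : ℤ := ∑ i ∈ range (n+1),
          (-1:ℤ)^i * ((K+1+n).choose (n-i)) * ((K+1+i).choose (i+1)) with hR
      rw [Finset.sum_range_succ'] at houter
      have hcongr1 : ∀ i ∈ range (n+1),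
          (-1:ℤ)^(i+1) * ((K+(n+1)).choose (n+1-(i+1))) * ((K+(i+1)).choose (i+1))
          = -((-1:ℤ)^i * ((K+1+n).choose (n-i)) * ((K+1+i).choose (i+1))) := by
        intro i hi
        have e1 : n+1-(i+1) = n-i := by omega
        have e2 : K+(n+1) = K+1+n := by omega
        have e3 : K+(i+1) = K+1+i := by omega
        rw [e1, e2, e3]
        ring
      rw [Finset.sum_congr rfl hcongr1, Finset.sum_neg_distrib] at houter
      simp only [pow_zero, one_mul, Nat.sub_zero, Nat.add_zero, Nat.choose_zero_right,
        Nat.cast_one, mul_one] at houter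
      have hQ : ∑ i ∈ range (n+1+1),
          (-1:ℤ)^i * ((K+1+n).choose (n+1-i)) * ((K+1+i).choose i) = 0 := by
        rw [Finset.sum_range_succ']
        have hc : ∀ i ∈ range (n+1),
            (-1:ℤ)^(i+1) * ((K+1+n).choose (n+1-(i+1))) * ((K+1+(i+1)).choose (i+1))
            = -((-1:ℤ)^i * ((K+1+n).choose (n-i)) * ((K+1+i).choose i))
              + -((-1:ℤ)^i * ((K+1+n).choose (n-i)) * ((K+1+i).choose (i+1))) := by
          intro i hi
          have e1 : n+1-(i+1) = n-i := by omega
          have e2 : K+1+(i+1) = (K+1+i)+1 := by omega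
          rw [e1, e2, Nat.choose_succ_succ]
          push_cast; ring
        rw [Finset.sum_congr rfl hc, Finset.sum_add_distrib, Finset.sum_neg_distrib,
          Finset.sum_neg_distrib, hinner, ← hR]
        simp only [pow_zero, one_mul, Nat.sub_zero, Nat.choose_zero_right,
          Nat.cast_one, mul_one, neg_zero, zero_add]
        have e4 : K+1+n = K+(n+1) := by omega
        rw [e4]
        linarith [houter]
      rw [Finset.sum_range_succ]
      have hsplit : ∀ i ∈ range (n+1),
          (-1:ℤ)^i * ((K+1+(n+1)).choose (n+1-i)) * ((K+1+i).choose i)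
          = (-1:ℤ)^i * ((K+1+n).choose (n-i)) * ((K+1+i).choose i)
            + (-1:ℤ)^i * ((K+1+n).choose (n+1-i)) * ((K+1+i).choose i) := by
        intro i hi
        rw [mem_range] at hi
        have e1 : n+1-i = (n-i)+1 := by omega
        have e2 : K+1+(n+1) = (K+1+n)+1 := by omega
        rw [e1, e2, Nat.choose_succ_succ]
        push_cast; ring
      rw [Finset.sum_congr rfl hsplit, Finset.sum_add_distrib, hinner, zero_add]
      rw [Finset.sum_range_succ] at hQ
      simp only [Nat.sub_self, Nat.choose_zero_right, Nat.cast_one, pow_zero, one_mul,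
        mul_one] at hQ ⊢
      have e5 : K+1+(n+1) = K+n+2 := by omega
      have e6 : K+1+n = K+n+1 := by omega
      rw [e5, e6] at hQ ⊢
      linarith [hQ]

lemma keyIcc (K n : ℕ) (hn : 2 ≤ n) :
    ∑ i ∈ Icc 2 n, (-1:ℤ)^i * ((K+n).choose (n-i)) * ((K+i).choose i)
      = ((K:ℤ)+1) * (K+n).choose (n-1) - (K+n).choose n := by
  have h := keyG K n (by omega)
  rw [Finset.range_eq_Ico, Finset.sum_eq_sum_Ico_succ_bot (by omega : 0 < n+1),
    Finset.sum_eq_sum_Ico_succ_bot (by omega : 0+1 < n+1)] at h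
  rw [show (0:ℕ)+1+1 = 2 from rfl, Finset.Ico_add_one_right_eq_Icc] at h
  simp only [pow_zero, pow_one, one_mul, Nat.sub_zero, Nat.add_zero,
    Nat.choose_zero_right, Nat.choose_one_right, Nat.cast_one, mul_one, neg_one_mul,
    zero_add, Nat.zero_add] at h
  push_cast at h
  linarith [h]

/-- Case 2 of the proof of Theorem 4.8: the coefficient of
`(∂f)^{r−n} f^{n} (π̃ Id − π̃ψ)^{−n}` in `𝒰_k^r` vanishes, for `1 ≤ k` and `2 ≤ n ≤ r − 1`. -/
theorem stmt8 (k n r : ℕ) (hk : 1 ≤ k) (hn : 2 ≤ n) (hnr : n ≤ r - 1) :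
    (r : ℤ) * (k : ℤ) ^ (n - 1) *
      (∑ i ∈ Finset.Icc 2 n,
        (-1 : ℤ) ^ (r - i) * Nat.choose (k + r - 1) (r - i) *
          Nat.choose (r - i) (n - i) * Nat.choose (k + i - 1) i) +
    (r : ℤ) * (k : ℤ) ^ n *
      (∑ i ∈ Finset.Icc 3 (n + 1),
        (-1 : ℤ) ^ (r - i) * Nat.choose (k + r - 1) (r - i) *
          Nat.choose (r - i) (n + 1 - i) * Nat.choose (k + i - 1) (i - 1)) +
    (-1 : ℤ) ^ (r - 1) * ((r : ℤ) - 1) * (k : ℤ) ^ n *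
      Nat.choose (k + r - 1) (r - 1) * Nat.choose r n +
    (-1 : ℤ) ^ r * (r : ℤ) * ((k : ℤ) + 1) * (k : ℤ) ^ n *
      Nat.choose (k + r - 1) (r - 2) * Nat.choose (r - 2) (n - 1) = 0 := by
  obtain ⟨K, rfl⟩ : ∃ K, k = K + 1 := ⟨k - 1, by omega⟩
  obtain ⟨N, rfl⟩ : ∃ N, n = N + 2 := ⟨n - 2, by omega⟩
  obtain ⟨M, rfl⟩ : ∃ M, r = N + M + 3 := ⟨r - N - 3, by omega⟩
  rw [show K+1+(N+M+3)-1 = K+N+M+3 from by omega,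
      show N+M+3-1 = N+M+2 from by omega,
      show N+M+3-2 = N+M+1 from by omega,
      show N+2-1 = N+1 from by omega]
  -- first sum
  have hS1 : ∑ i ∈ Finset.Icc 2 (N+2),
      (-1:ℤ) ^ (N+M+3-i) * ((K+N+M+3).choose (N+M+3-i) : ℤ) *
        ((N+M+3-i).choose (N+2-i) : ℤ) * ((K+1+i-1).choose i : ℤ)
      = (-1:ℤ)^(N+M+3) * ((K+N+M+3).choose (M+1) : ℤ) *
          (((K:ℤ)+1) * ((K+N+2).choose (N+1) : ℤ) - ((K+N+2).choose (N+2) : ℤ)) := by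
    have hpt : ∀ i ∈ Finset.Icc 2 (N+2),
        (-1:ℤ) ^ (N+M+3-i) * ((K+N+M+3).choose (N+M+3-i) : ℤ) *
          ((N+M+3-i).choose (N+2-i) : ℤ) * ((K+1+i-1).choose i : ℤ)
        = ((-1:ℤ)^(N+M+3) * ((K+N+M+3).choose (M+1) : ℤ)) *
            ((-1:ℤ)^i * ((K+(N+2)).choose (N+2-i) : ℤ) * ((K+i).choose i : ℤ)) := by
      intro i hi
      rw [Finset.mem_Icc] at hi
      rw [show K+1+i-1 = K+i from by omega, npow_sub (N+M+3) i (by omega)]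
      have ht : (K+N+M+3).choose (N+M+3-i) * ((N+M+3-i).choose (N+2-i))
          = (K+N+M+3).choose (M+1) * ((K+(N+2)).choose (N+2-i)) := by
        rw [tri (by omega) (by omega), show (N+M+3-i)-(N+2-i) = M+1 from by omega,
          show K+N+M+3-(M+1) = K+(N+2) from by omega]
      have ht' : ((K+N+M+3).choose (N+M+3-i) : ℤ) * ((N+M+3-i).choose (N+2-i) : ℤ)
          = ((K+N+M+3).choose (M+1) : ℤ) * ((K+(N+2)).choose (N+2-i) : ℤ) := by
        exact_mod_cast ht
      linear_combination ((-1:ℤ)^(N+M+3) * (-1:ℤ)^i * ((K+i).choose i : ℤ)) * ht'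
    rw [Finset.sum_congr rfl hpt, ← Finset.mul_sum, keyIcc K (N+2) (by omega),
      show N+2-1 = N+1 from by omega, show K+(N+2) = K+N+2 from by omega]
  -- second sum
  have hre : ∑ i ∈ Finset.Icc 3 (N+2+1),
      ((-1:ℤ)^(i-1) * ((K+1+(N+2)).choose (N+2-(i-1)) : ℤ) * ((K+1+(i-1)).choose (i-1) : ℤ))
      = ∑ i ∈ Finset.Icc 2 (N+2),
      ((-1:ℤ)^i * ((K+1+(N+2)).choose (N+2-i) : ℤ) * ((K+1+i).choose i : ℤ)) := by
    rw [← Finset.Ico_add_one_right_eq_Icc, ← Finset.Ico_add_one_right_eq_Icc, Finset.sum_Ico_eq_sum_range,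
      Finset.sum_Ico_eq_sum_range, show N+2+1+1-3 = N+1 from by omega,
      show N+2+1-2 = N+1 from by omega]
    refine Finset.sum_congr rfl fun t _ => ?_
    rw [show 3+t-1 = 2+t from by omega]
  have hS2 : ∑ i ∈ Finset.Icc 3 (N+2+1),
      (-1:ℤ)^(N+M+3-i) * ((K+N+M+3).choose (N+M+3-i) : ℤ) *
        ((N+M+3-i).choose (N+2+1-i) : ℤ) * ((K+1+i-1).choose (i-1) : ℤ)
      = (-1:ℤ)^(N+M+3) * ((K+N+M+3).choose M : ℤ) *
          (((K+N+3).choose (N+2) : ℤ) - ((K:ℤ)+2) * ((K+N+3).choose (N+1) : ℤ)) := by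
    have hpt : ∀ i ∈ Finset.Icc 3 (N+2+1),
        (-1:ℤ)^(N+M+3-i) * ((K+N+M+3).choose (N+M+3-i) : ℤ) *
          ((N+M+3-i).choose (N+2+1-i) : ℤ) * ((K+1+i-1).choose (i-1) : ℤ)
        = ((-1:ℤ)^(N+M+3) * ((K+N+M+3).choose M : ℤ)) *
            (-((-1:ℤ)^(i-1) * ((K+1+(N+2)).choose (N+2-(i-1)) : ℤ) *
              ((K+1+(i-1)).choose (i-1) : ℤ))) := by
      intro i hi
      rw [Finset.mem_Icc] at hi
      rw [show K+1+i-1 = K+1+(i-1) from by omega, npow_sub (N+M+3) i (by omega),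
        show N+2-(i-1) = N+2+1-i from by omega]
      have ht : (K+N+M+3).choose (N+M+3-i) * ((N+M+3-i).choose (N+2+1-i))
          = (K+N+M+3).choose M * ((K+1+(N+2)).choose (N+2+1-i)) := by
        rw [tri (by omega) (by omega), show (N+M+3-i)-(N+2+1-i) = M from by omega,
          show K+N+M+3-M = K+1+(N+2) from by omega]
      have ht' : ((K+N+M+3).choose (N+M+3-i) : ℤ) * ((N+M+3-i).choose (N+2+1-i) : ℤ)
          = ((K+N+M+3).choose M : ℤ) * ((K+1+(N+2)).choose (N+2+1-i) : ℤ) := by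
        exact_mod_cast ht
      have hsign : (-1:ℤ)^i = -(-1:ℤ)^(i-1) := by
        conv_lhs => rw [show i = (i-1)+1 from by omega]
        rw [pow_succ]; ring
      rw [hsign]
      linear_combination (-((-1:ℤ)^(N+M+3) * (-1:ℤ)^(i-1) * ((K+1+(i-1)).choose (i-1) : ℤ))) * ht'
    rw [Finset.sum_congr rfl hpt, ← Finset.mul_sum, Finset.sum_neg_distrib, hre,
      keyIcc (K+1) (N+2) (by omega), show N+2-1 = N+1 from by omega,
      show K+1+(N+2) = K+N+3 from by omega]
    push_cast
    try ring
  -- Pascal/trinomial decompositions of the last two products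
  have hP1 : ((K+N+M+3).choose (N+M+2) : ℤ) * ((N+M+3).choose (N+2) : ℤ)
      = ((K+N+M+3).choose M : ℤ) * ((K+N+3).choose (N+2) : ℤ)
        + ((K+N+M+3).choose (M+1) : ℤ) * ((K+N+2).choose (N+1) : ℤ) := by
    have e : (N+M+3).choose (N+2) = (N+M+2).choose (N+1) + (N+M+2).choose (N+2) := by
      rw [show N+M+3 = (N+M+2)+1 from rfl, show N+2 = (N+1)+1 from rfl,
        Nat.choose_succ_succ]
    have t1 : (K+N+M+3).choose (N+M+2) * ((N+M+2).choose (N+2))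
        = (K+N+M+3).choose M * ((K+N+3).choose (N+2)) := by
      rw [tri (by omega) (by omega), show (N+M+2)-(N+2) = M from by omega,
        show K+N+M+3-M = K+N+3 from by omega]
    have t2 : (K+N+M+3).choose (N+M+2) * ((N+M+2).choose (N+1))
        = (K+N+M+3).choose (M+1) * ((K+N+2).choose (N+1)) := by
      rw [tri (by omega) (by omega), show (N+M+2)-(N+1) = M+1 from by omega,
        show K+N+M+3-(M+1) = K+N+2 from by omega]
    have h : (K+N+M+3).choose (N+M+2) * ((N+M+3).choose (N+2))
        = (K+N+M+3).choose M * ((K+N+3).choose (N+2))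
          + (K+N+M+3).choose (M+1) * ((K+N+2).choose (N+1)) := by
      rw [e, Nat.mul_add, t1, t2, Nat.add_comm]
    exact_mod_cast h
  have hP2 : ((K+N+M+3).choose (N+M+1) : ℤ) * ((N+M+1).choose (N+1) : ℤ)
      = ((K+N+M+3).choose M : ℤ) * ((K+N+3).choose (N+1) : ℤ) := by
    have h : (K+N+M+3).choose (N+M+1) * ((N+M+1).choose (N+1))
        = (K+N+M+3).choose M * ((K+N+3).choose (N+1)) := by
      rw [tri (by omega) (by omega), show (N+M+1)-(N+1) = M from by omega,
        show K+N+M+3-M = K+N+3 from by omega]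
    exact_mod_cast h
  -- choose relations
  have h1 : ((K+N+M+3).choose (M+1) : ℤ) * ((M:ℤ)+1)
      = ((K+N+M+3).choose M : ℤ) * ((K:ℤ)+(N:ℤ)+3) := by
    have := Nat.choose_succ_right_eq (K+N+M+3) M
    rw [show K+N+M+3-M = K+N+3 from by omega] at this
    exact_mod_cast this
  have h2 : ((K+N+2).choose (N+2) : ℤ) * ((N:ℤ)+2)
      = ((K+N+2).choose (N+1) : ℤ) * ((K:ℤ)+1) := by
    have := Nat.choose_succ_right_eq (K+N+2) (N+1)
    rw [show K+N+2-(N+1) = K+1 from by omega, show N+1+1 = N+2 from rfl] at this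
    exact_mod_cast this
  have h4 : ((K+N+3).choose (N+2) : ℤ) * ((N:ℤ)+2)
      = ((K+N+2).choose (N+1) : ℤ) * ((K:ℤ)+(N:ℤ)+3) := by
    have h' := Nat.add_one_mul_choose_eq (K+N+2) (N+1)
    rw [show K+N+2+1 = K+N+3 from rfl, show N+1+1 = N+2 from rfl] at h'
    have h'' : ((K+N+3).choose (N+2) : ℤ) * ((N:ℤ)+2)
        = ((K:ℤ)+(N:ℤ)+3) * ((K+N+2).choose (N+1) : ℤ) := by exact_mod_cast h'.symm
    linear_combination h''
  -- the core identity
  have hmul : ((N:ℤ)+2) * (((K:ℤ)+1) * (((K+N+M+3).choose (M+1) : ℤ) * ((K+N+2).choose (N+1) : ℤ)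
        + ((K+N+M+3).choose M : ℤ) * ((K+N+3).choose (N+2) : ℤ)))
      = ((N:ℤ)+2) * (((N:ℤ)+(M:ℤ)+3) * (((K+N+M+3).choose (M+1) : ℤ) * ((K+N+2).choose (N+2) : ℤ))) := by
    linear_combination (((K:ℤ)+1) * ((K+N+M+3).choose M : ℤ)) * h4
      - (((K:ℤ)+1) * ((K+N+2).choose (N+1) : ℤ)) * h1
      - (((N:ℤ)+(M:ℤ)+3) * ((K+N+M+3).choose (M+1) : ℤ)) * h2
  have hcore : ((K:ℤ)+1) * (((K+N+M+3).choose (M+1) : ℤ) * ((K+N+2).choose (N+1) : ℤ)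
        + ((K+N+M+3).choose M : ℤ) * ((K+N+3).choose (N+2) : ℤ))
      = ((N:ℤ)+(M:ℤ)+3) * (((K+N+M+3).choose (M+1) : ℤ) * ((K+N+2).choose (N+2) : ℤ)) :=
    mul_left_cancel₀ (by positivity) hmul
  rw [hS1, hS2]
  push_cast
  linear_combination ((-1:ℤ)^(N+M+2) * ((N:ℤ)+(M:ℤ)+3-1) * ((K:ℤ)+1)^(N+2)) * hP1
    + ((-1:ℤ)^(N+M+3) * ((N:ℤ)+(M:ℤ)+3) * ((K:ℤ)+2) * ((K:ℤ)+1)^(N+2)) * hP2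
    + ((-1:ℤ)^(N+M+3) * ((K:ℤ)+1)^(N+1)) * hcore
end

section
/- For all integers k ≥ 1 and n ≥ 2, one has n · ∑_{v=2}^{n} (−1)^{n−v} · C(k + n − 1, n − v) · C(k + v − 1, v) + (−1)^{n−1} (n − 1) · k · C(k + n − 1, n − 1) = 0. -/
open Finset

/-- Full alternating sum vanishes. -/
lemma full_sum (k n : ℕ) (hk : 1 ≤ k) (hn : 1 ≤ n) :
    ∑ v ∈ Finset.range (n + 1),
      (-1 : ℤ) ^ (n - v) * Nat.choose (k + n - 1) (n - v) * Nat.choose (k + v - 1) v = 0 := by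
  set m := k + n - 1 with hm
  have hnm : n ≤ m := by omega
  have hre : ∑ v ∈ Finset.range (n + 1),
      (-1 : ℤ) ^ (n - v) * Nat.choose m (n - v) * Nat.choose (k + v - 1) v
      = ∑ j ∈ Finset.range (n + 1),
      (-1 : ℤ) ^ j * Nat.choose m j * Nat.choose (m - j) (n - j) := by
    rw [← Finset.sum_range_reflect]
    apply Finset.sum_congr rfl
    intro j hj
    simp only [Finset.mem_range] at hj
    have h0 : n + 1 - 1 - j = n - j := by omega
    have h1 : n - (n - j) = j := by omega
    have h2 : k + (n - j) - 1 = m - j := by omega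
    rw [h0, h1, h2]
  rw [hre]
  have hpt : ∀ j ∈ Finset.range (n + 1),
      (-1 : ℤ) ^ j * Nat.choose m j * Nat.choose (m - j) (n - j)
      = (Nat.choose m n : ℤ) * ((-1 : ℤ) ^ j * Nat.choose n j) := by
    intro j hj
    simp only [Finset.mem_range] at hj
    have := Nat.choose_mul (n := m) (show j ≤ n by omega)
    have h2 : (Nat.choose m j : ℤ) * Nat.choose (m - j) (n - j)
        = (Nat.choose m n : ℤ) * Nat.choose n j := by
      exact_mod_cast congrArg (Nat.cast : ℕ → ℤ) this.symm
    linear_combination (-1 : ℤ) ^ j * h2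
  rw [Finset.sum_congr rfl hpt, ← Finset.mul_sum,
    Int.alternating_sum_range_choose_of_ne (by omega), mul_zero]

/-- Case 3 of the proof of Theorem 4.8: for `k ≥ 1` and `n ≥ 2`,
`n ∑_{v=2}^{n} (−1)^{n−v} C(k+n−1, n−v) C(k+v−1, v) + (−1)^{n−1}(n−1) k C(k+n−1, n−1) = 0`. -/
theorem stmt9 (k n : ℕ) (hk : 1 ≤ k) (hn : 2 ≤ n) :
    (n : ℤ) * (∑ v ∈ Finset.Icc 2 n,
      (-1 : ℤ) ^ (n - v) * Nat.choose (k + n - 1) (n - v) * Nat.choose (k + v - 1) v) +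
    (-1 : ℤ) ^ (n - 1) * ((n : ℤ) - 1) * (k : ℤ) * Nat.choose (k + n - 1) (n - 1) = 0 := by
  set m := k + n - 1 with hm
  set f : ℕ → ℤ := fun v =>
    (-1 : ℤ) ^ (n - v) * Nat.choose m (n - v) * Nat.choose (k + v - 1) v with hf
  have hsplit : Finset.range (n + 1) = insert 0 (insert 1 (Finset.Icc 2 n)) := by
    ext x; simp only [Finset.mem_range, Finset.mem_insert, Finset.mem_Icc]; omega
  have h0 : ∑ v ∈ Finset.range (n + 1), f v = 0 := full_sum k n hk (by omega)
  rw [hsplit, Finset.sum_insert (by simp), Finset.sum_insert (by simp)] at h0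
  have hf0 : f 0 = (-1 : ℤ) ^ n * Nat.choose m n := by
    simp [hf, Nat.choose_eq_zero_of_lt]
  have hf1 : f 1 = (-1 : ℤ) ^ (n - 1) * Nat.choose m (n - 1) * k := by
    simp [hf]
  -- sign relation
  have hsign : (-1 : ℤ) ^ n = -(-1 : ℤ) ^ (n - 1) := by
    have h : n = (n - 1) + 1 := by omega
    nth_rewrite 1 [h]
    rw [pow_succ]; ring
  -- n * C(m, n) = k * C(m, n-1)
  have hkey : (n : ℤ) * Nat.choose m n = (k : ℤ) * Nat.choose m (n - 1) := by
    have h1 : Nat.choose m ((n - 1) + 1) * ((n - 1) + 1) = Nat.choose m (n - 1) * (m - (n - 1)) :=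
      Nat.choose_succ_right_eq m (n - 1)
    have h2 : (n - 1) + 1 = n := by omega
    have h3 : m - (n - 1) = k := by omega
    rw [h2, h3] at h1
    have h4 := congrArg (Nat.cast : ℕ → ℤ) h1
    push_cast at h4
    linarith
  have hS : ∑ v ∈ Finset.Icc 2 n, f v = -(f 0) - f 1 := by linarith
  rw [hS, hf0, hf1, hsign]
  linear_combination (-1 : ℤ) ^ (n - 1) * hkey
end

section
/- Let K be a field, L a field extension of K, and ψ : L → L a ring homomorphism fixing K elementwise. Let z ∈ L with ψ(z) ≠ z, let a, b, c, d ∈ K with δ := ad − bc ≠ 0 and j := cz + d ≠ 0, and set w := (az + b)/(cz + d). Let k, m ∈ ℤ, let s be a natural number, and let a₀, …, a_s ∈ L. For 0 ≤ i ≤ s define b_i := δ^{i−m} · j^{k−2i} · ∑_{t=0}^{s−i} C(i + t, t) · a_{i+t} · (c/j)^{t}. Then ψ(w) ≠ w and δ^{m} · j^{−k} · ∑_{i=0}^{s} b_i · (w − ψ(w))^{−i} = ∑_{i=0}^{s} a_i · (z − ψ(z))^{−i}. -/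
lemma dsum {R : Type*} [CommSemiring R] (A : ℕ → R) (x y : R) (s : ℕ) :
    ∑ i ∈ Finset.range (s+1), ∑ t ∈ Finset.range (s-i+1),
      (Nat.choose (i+t) t : R) * A (i+t) * x^t * y^i
    = ∑ n ∈ Finset.range (s+1), A n * (x+y)^n := by
  simp only [add_pow, Finset.mul_sum]
  rw [Finset.sum_sigma', Finset.sum_sigma']
  apply Finset.sum_nbij' (fun p => ⟨p.1 + p.2, p.2⟩) (fun p => ⟨p.1 - p.2, p.2⟩)
  · rintro ⟨i, t⟩ h
    simp only [Finset.mem_sigma, Finset.mem_range] at h ⊢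
    omega
  · rintro ⟨n, t⟩ h
    simp only [Finset.mem_sigma, Finset.mem_range] at h ⊢
    omega
  · rintro ⟨i, t⟩ h
    simp [Nat.add_sub_cancel]
  · rintro ⟨n, t⟩ h
    simp only [Finset.mem_sigma, Finset.mem_range] at h
    have : n - t + t = n := by omega
    simp [this]
  · rintro ⟨i, t⟩ h
    simp only [Nat.add_sub_cancel]
    ring

/-- The pointwise identity established in the surjectivity part of Theorem 5.5:
if the components transform like the components of a quasi-modular form, then
the associated nearly holomorphic sum is invariant under the slash action. -/
theorem stmt11 {K L : Type*} [Field K] [Field L] [Algebra K L]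
    (ψ : L →+* L) (hψ : ∀ x : K, ψ (algebraMap K L x) = algebraMap K L x)
    (z : L) (hz : ψ z ≠ z) (a b c d : K)
    (hδ : a * d - b * c ≠ 0)
    (hj : algebraMap K L c * z + algebraMap K L d ≠ 0)
    (k m : ℤ) (s : ℕ) (A : ℕ → L) :
    ψ ((algebraMap K L a * z + algebraMap K L b) /
        (algebraMap K L c * z + algebraMap K L d)) ≠
      (algebraMap K L a * z + algebraMap K L b) /
        (algebraMap K L c * z + algebraMap K L d) ∧
    algebraMap K L (a * d - b * c) ^ m *
      (algebraMap K L c * z + algebraMap K L d) ^ (-k) *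
      ∑ i ∈ Finset.range (s + 1),
        (algebraMap K L (a * d - b * c) ^ ((i : ℤ) - m) *
            (algebraMap K L c * z + algebraMap K L d) ^ (k - 2 * (i : ℤ)) *
            ∑ t ∈ Finset.range (s - i + 1),
              (Nat.choose (i + t) t : L) * A (i + t) *
                (algebraMap K L c / (algebraMap K L c * z + algebraMap K L d)) ^ t) *
          (((algebraMap K L a * z + algebraMap K L b) /
              (algebraMap K L c * z + algebraMap K L d) -
            ψ ((algebraMap K L a * z + algebraMap K L b) /
              (algebraMap K L c * z + algebraMap K L d)))⁻¹) ^ i =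
      ∑ i ∈ Finset.range (s + 1), A i * ((z - ψ z)⁻¹) ^ i := by
  set φ := algebraMap K L with hφ
  -- basic nonvanishing facts
  have hzz : z - ψ z ≠ 0 := sub_ne_zero.mpr hz.symm
  have hD : φ (a * d - b * c) ≠ 0 := by
    simpa using (map_ne_zero_iff φ (algebraMap K L).injective).mpr hδ
  have hψj : ψ (φ c * z + φ d) = φ c * ψ z + φ d := by
    rw [map_add, map_mul, hψ, hψ]
  have hjψ : φ c * ψ z + φ d ≠ 0 := by
    rw [← hψj]
    intro h
    exact hj (ψ.injective (by simpa using h))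
  -- ψ of w
  have hψw : ψ ((φ a * z + φ b) / (φ c * z + φ d)) =
      (φ a * ψ z + φ b) / (φ c * ψ z + φ d) := by
    rw [map_div₀, map_add, map_mul, hψ, hψ, hψj]
  -- the key identity for w - ψ w
  have key : (φ a * z + φ b) / (φ c * z + φ d) -
      ψ ((φ a * z + φ b) / (φ c * z + φ d)) =
      φ (a * d - b * c) * (z - ψ z) / ((φ c * z + φ d) * (φ c * ψ z + φ d)) := by
    rw [hψw, map_sub, map_mul, map_mul]
    rw [div_sub_div _ _ hj hjψ, div_eq_div_iff (mul_ne_zero hj hjψ) (mul_ne_zero hj hjψ)]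
    ring
  have hwψ : (φ a * z + φ b) / (φ c * z + φ d) -
      ψ ((φ a * z + φ b) / (φ c * z + φ d)) ≠ 0 := by
    rw [key]
    exact div_ne_zero (mul_ne_zero hD hzz) (mul_ne_zero hj hjψ)
  refine ⟨fun h => hwψ (by rw [h]; ring), ?_⟩
  -- inverse key identity
  have hinv : ((φ a * z + φ b) / (φ c * z + φ d) -
      ψ ((φ a * z + φ b) / (φ c * z + φ d)))⁻¹ =
      (φ c * z + φ d) ^ 2 / φ (a * d - b * c) *
        ((z - ψ z)⁻¹ - φ c / (φ c * z + φ d)) := by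
    have hsub : (z - ψ z)⁻¹ - φ c / (φ c * z + φ d) =
        (φ c * ψ z + φ d) / ((φ c * z + φ d) * (z - ψ z)) := by
      rw [inv_eq_one_div, div_sub_div _ _ hzz hj,
        mul_comm (z - ψ z) (φ c * z + φ d)]
      congr 1
      ring
    rw [key, hsub, inv_div, div_mul_div_comm,
      div_eq_div_iff (mul_ne_zero hD hzz)
        (mul_ne_zero hD (mul_ne_zero hj hzz))]
    ring
  rw [Finset.mul_sum]
  rw [show ∑ i ∈ Finset.range (s + 1), A i * ((z - ψ z)⁻¹) ^ i =
      ∑ i ∈ Finset.range (s+1), ∑ t ∈ Finset.range (s-i+1),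
        (Nat.choose (i+t) t : L) * A (i+t) * (φ c / (φ c * z + φ d))^t *
          ((z - ψ z)⁻¹ - φ c / (φ c * z + φ d))^i from by
    rw [dsum]
    congr 1
    ext n
    rw [add_sub_cancel]]
  refine Finset.sum_congr rfl fun i _ => ?_
  rw [hinv, ← Finset.sum_mul, mul_pow, div_pow, ← pow_mul]
  have e1 : φ (a * d - b * c) ^ (m : ℤ) * φ (a * d - b * c) ^ ((i : ℤ) - m)
      = φ (a * d - b * c) ^ (i : ℕ) := by
    rw [← zpow_add₀ hD]
    rw [show m + ((i : ℤ) - m) = (i : ℤ) by ring, zpow_natCast]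
  have e2 : (φ c * z + φ d) ^ (-k) * (φ c * z + φ d) ^ (k - 2 * (i : ℤ))
      = ((φ c * z + φ d) ^ (2 * i : ℕ))⁻¹ := by
    rw [← zpow_add₀ hj, show -k + (k - 2 * (i : ℤ)) = -(2 * i : ℕ) by push_cast; ring,
      zpow_neg, zpow_natCast]
  have e4 : φ (a * d - b * c) ^ (m : ℤ) * (φ c * z + φ d) ^ (-k) *
      (φ (a * d - b * c) ^ ((i : ℤ) - m) * (φ c * z + φ d) ^ (k - 2 * (i : ℤ))) *
      ((φ c * z + φ d) ^ (2 * i : ℕ) / φ (a * d - b * c) ^ (i : ℕ)) = 1 := by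
    rw [show φ (a * d - b * c) ^ (m : ℤ) * (φ c * z + φ d) ^ (-k) *
        (φ (a * d - b * c) ^ ((i : ℤ) - m) * (φ c * z + φ d) ^ (k - 2 * (i : ℤ))) =
        (φ (a * d - b * c) ^ (m : ℤ) * φ (a * d - b * c) ^ ((i : ℤ) - m)) *
        ((φ c * z + φ d) ^ (-k) * (φ c * z + φ d) ^ (k - 2 * (i : ℤ))) by ring,
      e1, e2]
    field_simp
  generalize hp1 : φ (a * d - b * c) ^ (m : ℤ) = p1 at e4 ⊢
  generalize hp2 : (φ c * z + φ d) ^ (-k) = p2 at e4 ⊢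
  generalize hp3 : φ (a * d - b * c) ^ ((i : ℤ) - m) = p3 at e4 ⊢
  generalize hp4 : (φ c * z + φ d) ^ (k - 2 * (i : ℤ)) = p4 at e4 ⊢
  linear_combination ((∑ t ∈ Finset.range (s - i + 1),
      (Nat.choose (i + t) t : L) * A (i + t) * (φ c / (φ c * z + φ d)) ^ t) *
      ((z - ψ z)⁻¹ - φ c / (φ c * z + φ d)) ^ i) * e4
end
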